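/- arXiv:1206.5437 — 3 statements merged into one kernel-verified Lean document; each statement's English description precedes it below -/
import Mathlib

section
/- For any two integer partitions λ and μ, if the content polynomials C_λ(q) and C_μ(q) are equal as Laurent polynomials in ℤ[q, q⁻¹], then λ = μ. Equivalently, for every integer d the number of boxes of content d in the Young diagram of λ equals the number of boxes of content d in the Young diagram of μ only if the two Young diagrams coincide, so a partition can be reconstructed from its content polynomial. -/
/-- A partition: a finite non-increasing list of positive integers. -/
structure YPartition where
  parts : List ℕ
  pos : ∀ p ∈ parts, 0 < p
  sorted : parts.Pairwise (· ≥ ·)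

/-- The content polynomial `C_λ(q) = Σ_{(i,j) ∈ Y(λ)} q^(j-i)` as a Laurent polynomial
in `ℤ[q, q⁻¹]`.  Rows and columns are indexed from `0`; the box in (0-indexed) row `i`
and column `j` has content `j - i`. -/
noncomputable def contentPoly (lam : YPartition) : LaurentPolynomial ℤ :=
  ∑ i ∈ Finset.range lam.parts.length, ∑ j ∈ Finset.range (lam.parts.getD i 0),
    LaurentPolynomial.T ((j : ℤ) - (i : ℤ))

/-!
The largest content occurring in a partition is `λ₁ - 1`, so `C_λ` determines the first
part. Deleting the first row raises every remaining content by one, so the partition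
`(λ₂, λ₃, …)` has content polynomial `q (C_λ - 1 - q - ⋯ - q^(λ₁-1))`, and induction on the
number of rows recovers all parts.
-/

open Finset

def contentCount (l : List ℕ) (d : ℤ) : ℕ :=
  ∑ i ∈ range l.length, ∑ j ∈ range (l.getD i 0), if (j : ℤ) - i = d then 1 else 0

theorem YPartition.ext {lam mu : YPartition} (h : lam.parts = mu.parts) : lam = mu := by
  cases lam
  cases mu
  subst h
  rfl

theorem contentPoly_coeff (lam : YPartition) (d : ℤ) :
    (contentPoly lam).coeff d = contentCount lam.parts d := by
  simp only [contentPoly, contentCount, AddMonoidAlgebra.coeff_sum, Finsupp.finsetSum_apply,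
    LaurentPolynomial.T_apply, Nat.cast_sum, Nat.cast_ite, Nat.cast_one, Nat.cast_zero]

@[simp]
theorem contentCount_nil (d : ℤ) : contentCount [] d = 0 := by
  simp [contentCount]

theorem sum_range_ite_natCast_eq (p : ℕ) (d : ℤ) :
    (∑ j ∈ range p, if (j : ℤ) = d then 1 else 0) = if 0 ≤ d ∧ d < p then 1 else 0 := by
  rcases d with n | n <;> simp [Finset.sum_ite_eq']

theorem contentCount_cons (p : ℕ) (l : List ℕ) (d : ℤ) :
    contentCount (p :: l) d = (if 0 ≤ d ∧ d < p then 1 else 0) + contentCount l (d + 1) := by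
  have hshift (i j : ℕ) : (j : ℤ) - (i + 1 : ℕ) = d ↔ (j : ℤ) - i = d + 1 := by omega
  simp only [contentCount, List.length_cons, sum_range_succ', List.getD_cons_succ,
    List.getD_cons_zero, Nat.cast_zero, sub_zero, sum_range_ite_natCast_eq, hshift, add_comm]

theorem lt_of_contentCount_pos {l : List ℕ} {c : ℕ} (hc : ∀ x ∈ l, x ≤ c) {d : ℤ}
    (hd : 0 < contentCount l d) : d < c := by
  obtain ⟨i, hi, hrow⟩ := exists_ne_zero_of_sum_ne_zero hd.ne'
  obtain ⟨j, hj, hbox⟩ := exists_ne_zero_of_sum_ne_zero hrow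
  rw [mem_range] at hi hj
  have hjc : l.getD i 0 ≤ c := by
    rw [List.getD_eq_getElem _ _ hi]
    exact hc _ (List.getElem_mem hi)
  split_ifs at hbox with hcontent
  · omega
  · simp at hbox

theorem contentCount_cons_pred_pos {p : ℕ} (hp : 0 < p) (l : List ℕ) :
    0 < contentCount (p :: l) (p - 1) := by
  rw [contentCount_cons, if_pos (by omega)]
  omega

theorem head_le_of_contentCount_eq {p q : ℕ} {l m : List ℕ} (hl : (p :: l).Pairwise (· ≥ ·))
    (hq : 0 < q) (h : ∀ d, contentCount (p :: l) d = contentCount (q :: m) d) : q ≤ p := by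
  have hbound : ∀ x ∈ p :: l, x ≤ p := by
    simpa using (List.pairwise_cons.mp hl).1
  have := lt_of_contentCount_pos hbound ((h _).symm ▸ contentCount_cons_pred_pos hq m)
  omega

theorem contentCount_eq_of_cons {p : ℕ} {l m : List ℕ}
    (h : ∀ d, contentCount (p :: l) d = contentCount (p :: m) d) (d : ℤ) :
    contentCount l d = contentCount m d := by
  have := h (d - 1)
  simp only [contentCount_cons, sub_add_cancel] at this
  omega

theorem eq_of_contentCount_eq {l m : List ℕ} (hlpos : ∀ x ∈ l, 0 < x) (hmpos : ∀ x ∈ m, 0 < x)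
    (hl : l.Pairwise (· ≥ ·)) (hm : m.Pairwise (· ≥ ·))
    (h : ∀ d, contentCount l d = contentCount m d) : l = m := by
  induction l generalizing m with
  | nil =>
    cases m with
    | nil => rfl
    | cons q m =>
      have := contentCount_cons_pred_pos (hmpos q List.mem_cons_self) m
      simp [← h] at this
  | cons p l ih =>
    cases m with
    | nil =>
      have := contentCount_cons_pred_pos (hlpos p List.mem_cons_self) l
      simp [h] at this
    | cons q m =>
      have hqp := head_le_of_contentCount_eq hl (hmpos q List.mem_cons_self) h
      have hpq := head_le_of_contentCount_eq hm (hlpos p List.mem_cons_self) fun d => (h d).symm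
      obtain rfl : p = q := le_antisymm hpq hqp
      rw [ih (fun x hx => hlpos x (List.mem_cons_of_mem p hx))
        (fun x hx => hmpos x (List.mem_cons_of_mem p hx)) hl.of_cons hm.of_cons
        (contentCount_eq_of_cons h)]

/-- A partition is uniquely determined by its content polynomial: if
`C_λ(q) = C_μ(q)` in `ℤ[q, q⁻¹]` then `λ = μ`. -/
theorem contentPoly_injective (lam mu : YPartition)
    (h : contentPoly lam = contentPoly mu) : lam = mu := by
  have hcount (d : ℤ) : contentCount lam.parts d = contentCount mu.parts d := by
    exact_mod_cast (contentPoly_coeff lam d).symm.trans (h ▸ contentPoly_coeff mu d)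
  exact YPartition.ext (eq_of_contentCount_eq lam.pos mu.pos lam.sorted mu.sorted hcount)
end

section
/- Let ℚ(s) be the field of rational functions in one variable s over ℚ and set z = s − s⁻¹. The map sending a partition λ to the element z · C_λ(s²) + z⁻¹ of ℚ(s) is injective on the set of all partitions (including the empty partition, which is sent to z⁻¹). -/
/-- The evaluation `C_λ(s²) = Σ_{(i,j) ∈ Y(λ)} s^(2(j-i))` of the content polynomial
at `q = s²` inside the rational function field `ℚ(s)`.  Rows and columns are indexed
from `0`; the box in (0-indexed) row `i` and column `j` has content `j - i`. -/
noncomputable def contentEval (lam : YPartition) : RatFunc ℚ :=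
  ∑ i ∈ Finset.range lam.parts.length, ∑ j ∈ Finset.range (lam.parts.getD i 0),
    (RatFunc.X : RatFunc ℚ) ^ (2 * ((j : ℤ) - (i : ℤ)))

/-!
With `q = s²` we have `s · z = q - 1`, so the hypothesis says `(q - 1) C_λ(q) = (q - 1) C_μ(q)`.
Each row telescopes, `(q - 1) Σ_{j < λᵢ} q^(j - i) = q^(λᵢ - i) - q^(-i)`, so for any `L` at least
the number of rows, `(q - 1) C_λ(q)` is `Σ_{i < L} q^(λᵢ - i)` up to a term independent of `λ`.
The exponents `λᵢ - i` are strictly decreasing, hence distinct, and distinct powers of `s` are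
linearly independent (read off coefficients in `ℚ((s))`); so the set `{λᵢ - i}` is determined,
and with it the decreasing sequence `λᵢ - i` and the partition.
-/

open Finset

namespace RatFunc

variable {K : Type*} [Field K]

theorem sum_X_zpow_injective :
    Function.Injective fun S : Finset ℤ => ∑ n ∈ S, (X : RatFunc K) ^ n := by
  have coeff_sum_single (S : Finset ℤ) (m : ℤ) :
      (∑ n ∈ S, HahnSeries.single n (1 : K)).coeff m = if m ∈ S then 1 else 0 := by
    rw [HahnSeries.coeff_sum]
    split_ifs with hm
    · rw [sum_eq_single_of_mem m hm fun n _ hn => HahnSeries.coeff_single_of_ne hn.symm]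
      exact HahnSeries.coeff_single_same m 1
    · exact sum_eq_zero fun n hn =>
        HahnSeries.coeff_single_of_ne (ne_of_mem_of_not_mem hn hm).symm
  intro S T h
  have hL := congrArg (algebraMap (RatFunc K) (LaurentSeries K)) h
  simp only [map_sum, map_zpow₀, coe_X, ← single_zpow] at hL
  ext m
  have hm := congrArg (HahnSeries.coeff · m) hL
  simp only [coeff_sum_single] at hm
  split_ifs at hm <;> simp_all

theorem range_eq_of_sum_X_zpow_eq {ι : Type*} [Fintype ι] {b c : ι → ℤ}
    (hb : Function.Injective b) (hc : Function.Injective c)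
    (h : ∑ i, (X : RatFunc K) ^ b i = ∑ i, (X : RatFunc K) ^ c i) :
    Set.range b = Set.range c := by
  classical
  rw [← sum_image hb.injOn, ← sum_image hc.injOn] at h
  rw [← Set.image_univ, ← Set.image_univ, ← coe_univ, ← coe_image, ← coe_image,
    sum_X_zpow_injective h]

end RatFunc

open RatFunc

theorem sq_sub_one_mul_sum_zpow_two_mul {K : Type*} [Field K] {x : K} (hx : x ≠ 0) (m : ℕ)
    (k : ℤ) :
    (x ^ 2 - 1) * ∑ j ∈ range m, x ^ (2 * ((j : ℤ) - k)) =
      x ^ (2 * ((m : ℤ) - k)) - x ^ (-2 * k) := by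
  rw [mul_sum]
  convert sum_range_sub (fun j : ℕ => x ^ (2 * ((j : ℤ) - k))) m using 2 with j
  · rw [sub_mul, ← zpow_natCast, ← zpow_add₀ hx]
    push_cast
    ring_nf
  · simp

namespace YPartition

variable (lam : YPartition)

def row (i : ℕ) : ℕ := lam.parts.getD i 0

theorem antitone_row : Antitone lam.row := by
  intro a b hab
  by_cases hb : b < lam.parts.length
  · have ha : a < lam.parts.length := hab.trans_lt hb
    rw [row, row, List.getD_eq_getElem _ _ ha, List.getD_eq_getElem _ _ hb]
    exact lam.sorted.rel_get_of_le (show (⟨a, ha⟩ : Fin _) ≤ ⟨b, hb⟩ from hab)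
  · rw [row, List.getD_eq_default _ _ (not_lt.mp hb)]
    exact Nat.zero_le _

theorem strictAnti_row_sub : StrictAnti fun i : ℕ => (lam.row i : ℤ) - i := by
  intro a b hab
  have := lam.antitone_row hab.le
  show (lam.row b : ℤ) - b < (lam.row a : ℤ) - a
  omega

theorem row_eq_zero_iff {i : ℕ} : lam.row i = 0 ↔ lam.parts.length ≤ i := by
  refine ⟨fun h => not_lt.mp fun hi => ?_, List.getD_eq_default _ _⟩
  have := lam.pos _ (List.getElem_mem hi)
  rw [row, List.getD_eq_getElem _ _ hi] at h
  omega

theorem ext_row {mu : YPartition} (h : lam.row = mu.row) : lam = mu := by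
  have hlen : lam.parts.length = mu.parts.length := by
    apply le_antisymm
    · rw [← lam.row_eq_zero_iff, h, mu.row_eq_zero_iff]
    · rw [← mu.row_eq_zero_iff, ← h, lam.row_eq_zero_iff]
  have hparts : lam.parts = mu.parts := by
    refine List.ext_getElem hlen fun i h₁ h₂ => ?_
    have := congrFun h i
    rwa [row, row, List.getD_eq_getElem _ _ h₁, List.getD_eq_getElem _ _ h₂] at this
  cases lam
  cases mu
  cases hparts
  rfl

end YPartition

theorem contentEval_eq_sum_range (lam : YPartition) {L : ℕ} (hL : lam.parts.length ≤ L) :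
    contentEval lam =
      ∑ i ∈ range L, ∑ j ∈ range (lam.row i), (X : RatFunc ℚ) ^ (2 * ((j : ℤ) - i)) := by
  refine sum_subset (range_subset_range.mpr hL) fun i _ hi => ?_
  rw [show lam.parts.getD i 0 = 0 from (lam.row_eq_zero_iff).2 (not_lt.mp (mt mem_range.2 hi)),
    range_zero, sum_empty]

theorem X_sq_sub_one_mul_contentEval (lam : YPartition) {L : ℕ} (hL : lam.parts.length ≤ L) :
    ((X : RatFunc ℚ) ^ 2 - 1) * contentEval lam =
      ∑ i ∈ range L, (X : RatFunc ℚ) ^ (2 * ((lam.row i : ℤ) - i)) -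
        ∑ i ∈ range L, (X : RatFunc ℚ) ^ (-2 * (i : ℤ)) := by
  rw [contentEval_eq_sum_range lam hL, mul_sum, ← sum_sub_distrib]
  exact sum_congr rfl fun i _ => sq_sub_one_mul_sum_zpow_two_mul X_ne_zero _ _

/-- With `z = s - s⁻¹ ∈ ℚ(s)`, the map `λ ↦ z · C_λ(s²) + z⁻¹` is injective on
partitions (the empty partition is sent to `z⁻¹`). -/
theorem injective_z_contentEval_add_zinv :
    Function.Injective (fun lam : YPartition =>
      (RatFunc.X - RatFunc.X⁻¹) * contentEval lam + (RatFunc.X - RatFunc.X⁻¹)⁻¹) := by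
  intro lam mu h
  have hC : ((X : RatFunc ℚ) ^ 2 - 1) * contentEval lam = (X ^ 2 - 1) * contentEval mu := by
    have := congrArg ((X : RatFunc ℚ) * ·) (add_right_cancel h)
    simpa only [← mul_assoc, mul_sub, mul_inv_cancel₀ (X_ne_zero (K := ℚ)), sq] using this
  set L := max lam.parts.length mu.parts.length
  rw [X_sq_sub_one_mul_contentEval lam (le_max_left _ _),
    X_sq_sub_one_mul_contentEval mu (le_max_right _ _), sub_left_inj, sum_range, sum_range] at hC
  have hanti (nu : YPartition) : StrictAnti fun i : Fin L => 2 * ((nu.row i : ℤ) - i) :=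
    ((strictMono_mul_left_of_pos two_pos).comp_strictAnti nu.strictAnti_row_sub).comp_strictMono
      Fin.val_strictMono
  have hrows := ((hanti lam).range_inj (hanti mu)).1
    (range_eq_of_sum_X_zpow_eq (hanti lam).injective (hanti mu).injective hC)
  refine lam.ext_row (funext fun i => ?_)
  by_cases hi : i < L
  · have := congrFun hrows ⟨i, hi⟩
    simp only at this
    omega
  · rw [lam.row_eq_zero_iff.2 (by omega), mu.row_eq_zero_iff.2 (by omega)]
end

section
/- Let λ = (λ₁, …, λ_ℓ) and μ = (μ₁, …, μ_k) be partitions, and let M_{λ,μ} be the (finite) set of ℓ × k matrices with nonnegative integer entries whose i-th row sums to λ_i and whose j-th column sums to μ_j. Define Laurent polynomials ⟨m⟩ ∈ ℤ[z, z⁻¹] by ⟨0⟩ = z⁻² and, for m ≥ 1, ⟨m⟩ = Σ_{j=0}^{m−1} C(m+j, 2j+1) z^{2j}, where C(·,·) is the binomial coefficient. Then the Laurent polynomial z^{2ℓk − ℓ − k} · Σ_{(b_{ij}) ∈ M_{λ,μ}} Π_{i,j} ⟨b_{ij}⟩ contains no negative powers of z — indeed every monomial appearing in it has z-degree at least |ℓ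 − k| — and all of its coefficients are nonnegative integers. -/
/-- The Laurent polynomial `⟨m⟩ ∈ ℤ[z, z⁻¹]`: `⟨0⟩ = z⁻²` and, for `m ≥ 1`,
`⟨m⟩ = Σ_{j=0}^{m−1} C(m+j, 2j+1) z^(2j)`. -/
noncomputable def angleBracket (m : ℕ) : LaurentPolynomial ℤ :=
  if m = 0 then LaurentPolynomial.T (-2)
  else ∑ j ∈ Finset.range m,
    LaurentPolynomial.C (((m + j).choose (2 * j + 1) : ℤ)) *
      LaurentPolynomial.T (2 * (j : ℤ))

/-- The combinatorial formula `z^(2ℓk − ℓ − k) · Σ_{(b_{ij}) ∈ M_{λ,μ}} Π_{i,j} ⟨b_{ij}⟩`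
for the 2-graded ruling polynomial of `A_λ A_{−μ}`, where `M_{λ,μ}` is the (finite) set
of `ℓ × k` matrices of nonnegative integers whose `i`-th row sums to `λ_i` and whose
`j`-th column sums to `μ_j`. -/
noncomputable def rulingPoly (lam mu : YPartition) : LaurentPolynomial ℤ :=
  LaurentPolynomial.T
      (2 * (lam.parts.length : ℤ) * (mu.parts.length : ℤ)
        - (lam.parts.length : ℤ) - (mu.parts.length : ℤ)) *
    ∑ᶠ B ∈ {B : Fin lam.parts.length → Fin mu.parts.length → ℕ |
        (∀ i, ∑ j, B i j = lam.parts.get i) ∧ (∀ j, ∑ i, B i j = mu.parts.get j)},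
      ∏ i, ∏ j, angleBracket (B i j)

/-!
Every factor `⟨m⟩` has nonnegative coefficients and no negative powers of `z`, except
`⟨0⟩ = z⁻²`. Laurent polynomials with nonnegative coefficients vanishing below degree `c`
form additive submonoids, graded multiplicatively in `c`, so each product `Π ⟨b_ij⟩` lies in
degrees `≥ -2 · #{zero entries}`. Every row and every column of a matrix in `M_{λ,μ}` has a
nonzero entry, so there are at least `max ℓ k` nonzero entries, and the shift `z^(2ℓk − ℓ − k)`
lifts the bound to `2 max ℓ k − ℓ − k = |ℓ − k|`.
-/

open Finset LaurentPolynomial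

def nonnegFrom (c : ℤ) : AddSubmonoid (LaurentPolynomial ℤ) where
  carrier := {P | ∀ n, (n < c → P.coeff n = 0) ∧ 0 ≤ P.coeff n}
  zero_mem' _ := ⟨fun _ => rfl, le_rfl⟩
  add_mem' {P Q} hP hQ n := by
    simp only [AddMonoidAlgebra.coeff_add, Finsupp.add_apply]
    exact ⟨fun hn => by rw [(hP n).1 hn, (hQ n).1 hn, add_zero], add_nonneg (hP n).2 (hQ n).2⟩

theorem nonnegFrom_antitone : Antitone nonnegFrom :=
  fun _ _ h _ hP n => ⟨fun hn => (hP n).1 (hn.trans_le h), (hP n).2⟩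

theorem single_mem_nonnegFrom {c n r : ℤ} (hr : 0 ≤ r) (hn : c ≤ n) :
    (AddMonoidAlgebra.single n r : LaurentPolynomial ℤ) ∈ nonnegFrom c := by
  intro m
  rw [AddMonoidAlgebra.coeff_single, Finsupp.single_apply]
  split_ifs <;> omega

theorem T_mem_nonnegFrom (n : ℤ) : (T n : LaurentPolynomial ℤ) ∈ nonnegFrom n :=
  single_mem_nonnegFrom zero_le_one le_rfl

theorem mul_mem_nonnegFrom {c d : ℤ} {P Q : LaurentPolynomial ℤ}
    (hP : P ∈ nonnegFrom c) (hQ : Q ∈ nonnegFrom d) : P * Q ∈ nonnegFrom (c + d) := by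
  classical
  intro n
  rw [AddMonoidAlgebra.coeff_mul]
  refine ⟨fun hn => sum_eq_zero fun a _ => sum_eq_zero fun b _ => ?_,
    Finsupp.sum_nonneg' fun a => Finsupp.sum_nonneg' fun b => ?_⟩
  · dsimp only
    split_ifs with hab
    · rcases lt_or_ge a c with ha | ha
      · rw [(hP a).1 ha, zero_mul]
      · rw [(hQ b).1 (by omega), mul_zero]
    · rfl
  · split_ifs
    exacts [mul_nonneg (hP a).2 (hQ b).2, le_rfl]

instance : SetLike.GradedMonoid nonnegFrom where
  one_mem := T_zero (R := ℤ) ▸ T_mem_nonnegFrom 0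
  mul_mem _ _ _ _ := mul_mem_nonnegFrom

theorem angleBracket_mem_nonnegFrom (m : ℕ) :
    angleBracket m ∈ nonnegFrom (if m = 0 then -2 else 0) := by
  unfold angleBracket
  split_ifs
  · exact T_mem_nonnegFrom (-2)
  · refine sum_mem fun j _ => ?_
    rw [← single_eq_C_mul_T]
    exact single_mem_nonnegFrom (Int.natCast_nonneg _) (by positivity)

theorem max_card_le_card_nonzero_entries {ι κ R : Type*} [Fintype ι] [Fintype κ] [Zero R]
    [DecidableEq R] (B : ι → κ → R)
    (hrow : ∀ i, ∃ j, B i j ≠ 0) (hcol : ∀ j, ∃ i, B i j ≠ 0) :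
    max (Fintype.card ι) (Fintype.card κ) ≤ #{p : ι × κ | B p.1 p.2 ≠ 0} := by
  refine max_le (card_le_card_of_surjOn Prod.fst fun i _ => ?_)
    (card_le_card_of_surjOn Prod.snd fun j _ => ?_)
  · obtain ⟨j, hj⟩ := hrow i
    exact ⟨(i, j), by simpa using hj, rfl⟩
  · obtain ⟨i, hi⟩ := hcol j
    exact ⟨(i, j), by simpa using hi, rfl⟩

theorem prod_angleBracket_mem_nonnegFrom {ι κ : Type*} [Fintype ι] [Fintype κ] (B : ι → κ → ℕ)
    (hrow : ∀ i, ∃ j, B i j ≠ 0) (hcol : ∀ j, ∃ i, B i j ≠ 0) :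
    ∏ i, ∏ j, angleBracket (B i j) ∈ nonnegFrom
      (|(Fintype.card ι : ℤ) - Fintype.card κ| -
        (2 * Fintype.card ι * Fintype.card κ - Fintype.card ι - Fintype.card κ)) := by
  refine nonnegFrom_antitone ?_ <| SetLike.prod_mem_graded nonnegFrom _ _ fun i _ =>
    SetLike.prod_mem_graded nonnegFrom _ _ fun j _ => angleBracket_mem_nonnegFrom (B i j)
  have hdeg : ∑ i, ∑ j, (if B i j = 0 then (-2 : ℤ) else 0) =
      2 * #{p : ι × κ | B p.1 p.2 ≠ 0} - 2 * (Fintype.card ι * Fintype.card κ) := by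
    have hcard := congrArg (Nat.cast : ℕ → ℤ) <| card_filter_add_card_filter_not
      (s := (univ : Finset (ι × κ))) (fun p => B p.1 p.2 = 0)
    rw [← Fintype.sum_prod_type' (f := fun i j => if B i j = 0 then (-2 : ℤ) else 0), sum_ite]
    simp only [sum_const, nsmul_eq_mul, card_univ, Fintype.card_prod] at hcard ⊢
    push_cast at hcard
    linarith
  have hmax := max_card_le_card_nonzero_entries B hrow hcol
  have hι : (Fintype.card ι : ℤ) ≤ #{p : ι × κ | B p.1 p.2 ≠ 0} := by
    exact_mod_cast (le_max_left _ _).trans hmax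
  have hκ : (Fintype.card κ : ℤ) ≤ #{p : ι × κ | B p.1 p.2 ≠ 0} := by
    exact_mod_cast (le_max_right _ _).trans hmax
  rw [hdeg]
  cases abs_cases ((Fintype.card ι : ℤ) - Fintype.card κ) <;> linarith

theorem YPartition.get_ne_zero (lam : YPartition) (i : Fin lam.parts.length) :
    lam.parts.get i ≠ 0 :=
  (lam.pos _ (List.get_mem _ _)).ne'

theorem rulingPoly_mem_nonnegFrom (lam mu : YPartition) :
    rulingPoly lam mu ∈ nonnegFrom |(lam.parts.length : ℤ) - mu.parts.length| := by
  have hsum : ∑ᶠ B ∈ {B : Fin lam.parts.length → Fin mu.parts.length → ℕ |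
        (∀ i, ∑ j, B i j = lam.parts.get i) ∧ (∀ j, ∑ i, B i j = mu.parts.get j)},
      ∏ i, ∏ j, angleBracket (B i j) ∈ nonnegFrom
        (|(lam.parts.length : ℤ) - mu.parts.length| -
          (2 * lam.parts.length * mu.parts.length - lam.parts.length - mu.parts.length)) := by
    refine finsum_mem_induction (· ∈ nonnegFrom _) (zero_mem _) (fun _ _ => add_mem) ?_
    rintro B ⟨hrow, hcol⟩
    simpa using prod_angleBracket_mem_nonnegFrom B
      (fun i => (exists_ne_zero_of_sum_ne_zero ((hrow i).trans_ne (lam.get_ne_zero i))).imp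
        fun _ => And.right)
      (fun j => (exists_ne_zero_of_sum_ne_zero ((hcol j).trans_ne (mu.get_ne_zero j))).imp
        fun _ => And.right)
  rw [rulingPoly, ← add_sub_cancel (2 * (lam.parts.length : ℤ) * mu.parts.length -
    lam.parts.length - mu.parts.length) |(lam.parts.length : ℤ) - mu.parts.length|]
  exact mul_mem_nonnegFrom (T_mem_nonnegFrom _) hsum

/-- The ruling polynomial `R²_{A_λ A_{−μ}}(z)` contains no negative powers of `z`:
every monomial appearing in it has `z`-degree at least `|ℓ − k|`, and all of its
coefficients are nonnegative integers. -/
theorem rulingPoly_coeff_nonneg_and_low_degree_vanish (lam mu : YPartition) :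
    (∀ m : ℤ, m < |(lam.parts.length : ℤ) - (mu.parts.length : ℤ)| →
      (rulingPoly lam mu).coeff m = 0) ∧
    (∀ m : ℤ, 0 ≤ (rulingPoly lam mu).coeff m) := by
  have h := rulingPoly_mem_nonnegFrom lam mu
  exact ⟨fun m => (h m).1, fun m => (h m).2⟩
end
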